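/- arXiv:1509.00666 — 5 statements merged into one kernel-verified Lean document; each statement's English description precedes it below -/
import Mathlib

section
/- Let P be the normal strictly positive logic obtained from K⁺ by adding the schema ◇A ⊢ A. Then the sequent p ∧ ◇⊤ ⊢ ◇p is not provable in P. Consequently, P is strictly contained in P(M(P)), so P is not the strictly positive fragment of any normal modal logic. -/
/-- Strictly positive formulas over signature `α` and variables `V`. -/
inductive SPF (α V : Type) : Type
  | var : V → SPF α V
  | top : SPF α V
  | and : SPF α V → SPF α V → SPF α V
  | dia : α → SPF α V → SPF α V
  deriving DecidableEq

namespace SPF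

/-- Simultaneous substitution. -/
def subst {α V : Type} (σ : V → SPF α V) : SPF α V → SPF α V
  | var v => σ v
  | top => top
  | and A B => and (A.subst σ) (B.subst σ)
  | dia a A => dia a (A.subst σ)

/-- `C.substVar p A` is `C[A/p]`: replace all occurrences of variable `p` in `C` by `A`. -/
def substVar {α V : Type} [DecidableEq V] (C : SPF α V) (p : V) (A : SPF α V) : SPF α V :=
  C.subst (fun v => if v = p then A else var v)

/-- `⊤` does not occur. -/
def noTop {α V : Type} : SPF α V → Prop
  | var _ => True
  | top => False
  | and A B => noTop A ∧ noTop B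
  | dia _ A => noTop A

/-- Contains at least one conjunction. -/
def hasAnd {α V : Type} : SPF α V → Prop
  | var _ => False
  | top => False
  | and _ _ => True
  | dia _ A => hasAnd A

end SPF

/-- A word `W ∈ Σ*` applied to a formula as a sequence of diamonds. -/
def wApp {α V : Type} (W : List α) (F : SPF α V) : SPF α V :=
  W.foldr (fun a G => SPF.dia a G) F

/-- Sequent calculus over `K⁺` with extra axiom set `Ax`.  `Der ∅` is exactly `K⁺`. -/
inductive Der {α V : Type} (Ax : Set (SPF α V × SPF α V)) : SPF α V → SPF α V → Prop
  | id (A) : Der Ax A A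
  | top (A) : Der Ax A SPF.top
  | cut {A B C} : Der Ax A B → Der Ax B C → Der Ax A C
  | andE1 (A B) : Der Ax (SPF.and A B) A
  | andE2 (A B) : Der Ax (SPF.and A B) B
  | andI {A B C} : Der Ax A B → Der Ax A C → Der Ax A (SPF.and B C)
  | mono (a) {A B} : Der Ax A B → Der Ax (SPF.dia a A) (SPF.dia a B)
  | ax {A B} : (A, B) ∈ Ax → Der Ax A B

/-- Normal strictly positive logic: a set of sequents containing `K⁺`,
closed under its rules and under substitution. -/
structure SPNormal {α V : Type} (P : Set (SPF α V × SPF α V)) : Prop where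
  kp : ∀ A B : SPF α V, Der ∅ A B → (A, B) ∈ P
  cut : ∀ A B C : SPF α V, (A, B) ∈ P → (B, C) ∈ P → (A, C) ∈ P
  andI : ∀ A B C : SPF α V, (A, B) ∈ P → (A, C) ∈ P → (A, SPF.and B C) ∈ P
  mono : ∀ (a : α) (A B : SPF α V), (A, B) ∈ P → (SPF.dia a A, SPF.dia a B) ∈ P
  substC : ∀ (σ : V → SPF α V) (A B : SPF α V), (A, B) ∈ P → (A.subst σ, B.subst σ) ∈ P

/-- Modal formulas. -/
inductive MF (α V : Type) : Type
  | var : V → MF α V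
  | bot : MF α V
  | imp : MF α V → MF α V → MF α V
  | dia : α → MF α V → MF α V

namespace MF

def neg {α V : Type} (A : MF α V) : MF α V := imp A bot
def box {α V : Type} (a : α) (A : MF α V) : MF α V := neg (dia a (neg A))
def mand {α V : Type} (A B : MF α V) : MF α V := neg (imp A (neg B))

def subst {α V : Type} (σ : V → MF α V) : MF α V → MF α V
  | var v => σ v
  | bot => bot
  | imp A B => imp (A.subst σ) (B.subst σ)
  | dia a A => dia a (A.subst σ)

end MF

/-- Normal modal logic (Hilbert-style closure conditions). -/
structure MNormal {α V : Type} (L : Set (MF α V)) : Prop where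
  k1 : ∀ A B : MF α V, MF.imp A (MF.imp B A) ∈ L
  k2 : ∀ A B C : MF α V,
    MF.imp (MF.imp A (MF.imp B C)) (MF.imp (MF.imp A B) (MF.imp A C)) ∈ L
  dne : ∀ A : MF α V, MF.imp (MF.neg (MF.neg A)) A ∈ L
  kax : ∀ (a : α) (A B : MF α V),
    MF.imp (MF.box a (MF.imp A B)) (MF.imp (MF.box a A) (MF.box a B)) ∈ L
  mp : ∀ A B : MF α V, MF.imp A B ∈ L → A ∈ L → B ∈ L
  nec : ∀ (a : α) (A : MF α V), A ∈ L → MF.box a A ∈ L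
  substC : ∀ (σ : V → MF α V) (A : MF α V), A ∈ L → A.subst σ ∈ L

/-- Translation of strictly positive formulas into modal formulas. -/
def toMF {α V : Type} : SPF α V → MF α V
  | SPF.var v => MF.var v
  | SPF.top => MF.neg MF.bot
  | SPF.and A B => MF.mand (toMF A) (toMF B)
  | SPF.dia a A => MF.dia a (toMF A)

/-- `𝒫(L)`: the strictly positive fragment of a modal logic `L`. -/
def Pfrag {α V : Type} (L : Set (MF α V)) : Set (SPF α V × SPF α V) :=
  {x | MF.imp (toMF x.1) (toMF x.2) ∈ L}

/-- `ℳ(P)`: the least normal modal logic containing all implications `A → B`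
for sequents `(A, B) ∈ P`. -/
def Mop {α V : Type} (P : Set (SPF α V × SPF α V)) : Set (MF α V) :=
  ⋂₀ {L | MNormal L ∧ ∀ x ∈ P, MF.imp (toMF x.1) (toMF x.2) ∈ L}

/-- Contexts: strictly positive formulas with exactly one occurrence of a hole. -/
inductive Ctx (α V : Type) : Type
  | hole : Ctx α V
  | andL : Ctx α V → SPF α V → Ctx α V
  | andR : SPF α V → Ctx α V → Ctx α V
  | dia : α → Ctx α V → Ctx α V

/-- Plugging a formula into a context. -/
def Ctx.fill {α V : Type} : Ctx α V → SPF α V → SPF α V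
  | Ctx.hole, F => F
  | Ctx.andL C B, F => SPF.and (C.fill F) B
  | Ctx.andR A C, F => SPF.and A (C.fill F)
  | Ctx.dia a C, F => SPF.dia a (C.fill F)

/-- Deep inference rules (before placing in a context).  `useTop` governs
whether the `⊤`-rule `A ⟹ ⊤` is available. -/
inductive DIRule {α V : Type} (Ax : Set (SPF α V × SPF α V)) (useTop : Bool) :
    SPF α V → SPF α V → Prop
  | dup (A) : DIRule Ax useTop A (SPF.and A A)
  | andE1 (A B) : DIRule Ax useTop (SPF.and A B) A
  | andE2 (A B) : DIRule Ax useTop (SPF.and A B) B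
  | top (A) : useTop = true → DIRule Ax useTop A SPF.top
  | ax {A B} : (A, B) ∈ Ax → DIRule Ax useTop A B

/-- One deep-inference step: a rule applied within a context. -/
def DStep {α V : Type} (Ax : Set (SPF α V × SPF α V)) (useTop : Bool)
    (A B : SPF α V) : Prop :=
  ∃ (C : Ctx α V) (F G : SPF α V), DIRule Ax useTop F G ∧ A = C.fill F ∧ B = C.fill G

/-- Derivability in the deep inference system: `B` derivable from `A`. -/
def Deriv {α V : Type} (Ax : Set (SPF α V × SPF α V)) (useTop : Bool) :
    SPF α V → SPF α V → Prop :=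
  Relation.ReflTransGen (DStep Ax useTop)

/-- One rewriting step of a semi-Thue system `R`. -/
def RStep {α : Type} (R : Set (List α × List α)) (w₁ w₂ : List α) : Prop :=
  ∃ X U V Y, (U, V) ∈ R ∧ w₁ = X ++ U ++ Y ∧ w₂ = X ++ V ++ Y

/-- `A ↠_R B`: the rewriting relation of a semi-Thue system. -/
def Rewrites {α : Type} (R : Set (List α × List α)) : List α → List α → Prop :=
  Relation.ReflTransGen (RStep R)

/-- Axioms of the logic `L_R` of a word rewriting system `R`:
all substitution instances `UC ⊢ VC` of the axioms `Up ⊢ Vp`, for rules `U ↦ V` of `R`. -/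
def DAx {α V : Type} (R : Set (List α × List α)) : Set (SPF α V × SPF α V) :=
  {x | ∃ (U W : List α) (C : SPF α V), (U, W) ∈ R ∧ x = (wApp U C, wApp W C)}

/-- Closure of a set of sequents under substitution (axiom schemata). -/
def substClosure {α V : Type} (S : Set (SPF α V × SPF α V)) :
    Set (SPF α V × SPF α V) :=
  {x | ∃ (A B : SPF α V) (σ : V → SPF α V), (A, B) ∈ S ∧ x = (A.subst σ, B.subst σ)}

/-- An (injective) Gödel numbering of strictly positive formulas over `Σ = Bool`. -/
def encSPF : SPF Bool ℕ → ℕ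
  | SPF.var v => Nat.pair 0 v
  | SPF.top => Nat.pair 1 0
  | SPF.and A B => Nat.pair 2 (Nat.pair (encSPF A) (encSPF B))
  | SPF.dia a A => Nat.pair 3 (Nat.pair (cond a 1 0) (encSPF A))

/-! ### Auxiliary machinery -/

section Aux

/-- Hilbert-style provability with hypotheses, over a normal modal logic `L`. -/
inductive PC {α V : Type} (L : Set (MF α V)) : Set (MF α V) → MF α V → Prop
  | ax {Γ A} : A ∈ L → PC L Γ A
  | hyp {Γ A} : A ∈ Γ → PC L Γ A
  | mp {Γ A B} : PC L Γ (MF.imp A B) → PC L Γ A → PC L Γ B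

variable {α V : Type} {L : Set (MF α V)}

lemma pc_mono {Γ Δ : Set (MF α V)} {A} (h : PC L Γ A) (hs : Γ ⊆ Δ) : PC L Δ A := by
  induction h with
  | ax h => exact PC.ax h
  | hyp h => exact PC.hyp (hs h)
  | mp _ _ ih1 ih2 => exact PC.mp ih1 ih2

lemma pc_id (hN : MNormal L) (Γ : Set (MF α V)) (A : MF α V) : PC L Γ (MF.imp A A) :=
  PC.mp (PC.mp (PC.ax (hN.k2 A (MF.imp A A) A)) (PC.ax (hN.k1 A (MF.imp A A))))
    (PC.ax (hN.k1 A A))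

lemma pc_dt (hN : MNormal L) {Γ : Set (MF α V)} {A B : MF α V}
    (h : PC L (insert B Γ) A) : PC L Γ (MF.imp B A) := by
  induction h with
  | ax h => exact PC.mp (PC.ax (hN.k1 _ _)) (PC.ax h)
  | hyp h =>
    rcases Set.mem_insert_iff.1 h with rfl | h
    · exact pc_id hN _ _
    · exact PC.mp (PC.ax (hN.k1 _ _)) (PC.hyp h)
  | mp _ _ ih1 ih2 => exact PC.mp (PC.mp (PC.ax (hN.k2 _ _ _)) ih1) ih2

lemma pc_toL (hN : MNormal L) {A : MF α V} (h : PC L (∅ : Set (MF α V)) A) : A ∈ L := by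
  induction h with
  | ax h => exact h
  | hyp h => exact absurd h (Set.notMem_empty _)
  | mp _ _ ih1 ih2 => exact hN.mp _ _ ih1 ih2

lemma pc_explosion (hN : MNormal L) {Γ : Set (MF α V)} {A : MF α V}
    (h : PC L Γ MF.bot) : PC L Γ A :=
  PC.mp (PC.ax (hN.dne A)) (PC.mp (PC.ax (hN.k1 MF.bot (MF.neg A))) h)

lemma pc_byContra (hN : MNormal L) {Γ : Set (MF α V)} {A : MF α V}
    (h : PC L (insert (MF.neg A) Γ) MF.bot) : PC L Γ A :=
  PC.mp (PC.ax (hN.dne A)) (pc_dt hN h)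

lemma pc_dni (hN : MNormal L) {Γ : Set (MF α V)} {A : MF α V}
    (h : PC L Γ A) : PC L Γ (MF.neg (MF.neg A)) :=
  pc_dt hN (PC.mp (PC.hyp (Set.mem_insert _ _)) (pc_mono h (Set.subset_insert _ _)))

lemma pc_contra (hN : MNormal L) {Γ : Set (MF α V)} {A B : MF α V}
    (h : PC L Γ (MF.imp A B)) : PC L Γ (MF.imp (MF.neg B) (MF.neg A)) := by
  apply pc_dt hN
  apply pc_dt hN
  exact PC.mp (PC.hyp (Set.mem_insert_of_mem _ (Set.mem_insert _ _)))
    (PC.mp (pc_mono h (fun x hx => Set.mem_insert_of_mem _ (Set.mem_insert_of_mem _ hx)))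
      (PC.hyp (Set.mem_insert _ _)))

/-! Semantics for part 1: the two-world countermodel. -/

/-- Truth in the model `W = {false, true}`, `R = {(false, true)}`, `v(p) = {false}`. -/
def evalSPF {V : Type} (p : V) : SPF Unit V → Bool → Prop
  | SPF.var q, w => q = p ∧ w = false
  | SPF.top, _ => True
  | SPF.and A B, w => evalSPF p A w ∧ evalSPF p B w
  | SPF.dia _ A, w => w = false ∧ evalSPF p A true

lemma evalSPF_down {V : Type} (p : V) (A : SPF Unit V)
    (h : evalSPF p A true) : evalSPF p A false := by
  induction A with
  | var q => exact absurd h.2 (by simp)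
  | top => trivial
  | and A B ihA ihB => exact ⟨ihA h.1, ihB h.2⟩
  | dia a A ih => exact absurd h.1 (by simp)

lemma evalSPF_sound {V : Type} (p : V) {A B : SPF Unit V}
    (h : Der ({x | ∃ A : SPF Unit V, x = (SPF.dia () A, A)} : Set (SPF Unit V × SPF Unit V)) A B) :
    ∀ w, evalSPF p A w → evalSPF p B w := by
  induction h with
  | id A => exact fun w h => h
  | top A => exact fun w _ => trivial
  | cut _ _ ih1 ih2 => exact fun w h => ih2 w (ih1 w h)
  | andE1 A B => exact fun w h => h.1
  | andE2 A B => exact fun w h => h.2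
  | andI _ _ ih1 ih2 => exact fun w h => ⟨ih1 w h, ih2 w h⟩
  | mono a _ ih => exact fun w h => ⟨h.1, ih true h.2⟩
  | @ax A B h =>
    obtain ⟨C, hC⟩ := h
    obtain ⟨h1, h2⟩ := Prod.mk.injEq .. ▸ hC
    subst h1; subst h2
    intro w hw
    rcases hw with ⟨hw, hC⟩
    subst hw
    exact evalSPF_down p _ hC

end Aux

section Main

variable {V : Type}

lemma key_hilbert (p : V) (L : Set (MF Unit V)) (hN : MNormal L)
    (hP : ∀ x ∈ {x : SPF Unit V × SPF Unit V | Der ({x | ∃ A : SPF Unit V, x = (SPF.dia () A, A)} : Set (SPF Unit V × SPF Unit V)) x.1 x.2},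
      MF.imp (toMF x.1) (toMF x.2) ∈ L) :
    MF.imp (toMF (SPF.and (SPF.var p) (SPF.dia () SPF.top)))
      (toMF (SPF.dia () (SPF.var p))) ∈ L := by
  -- abbreviations
  set P' : MF Unit V := MF.var p with hP'
  -- F2: ◇B → B ∈ L for every modal formula B
  have F2 : ∀ B : MF Unit V, MF.imp (MF.dia () B) B ∈ L := by
    intro B
    have h0 : MF.imp (MF.dia () (MF.var p)) (MF.var p) ∈ L :=
      hP (SPF.dia () (SPF.var p), SPF.var p) (Der.ax ⟨SPF.var p, rfl⟩)
    have := hN.substC (fun _ => B) _ h0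
    simpa [MF.subst] using this
  -- F1: ◇(p ∧ p) → ◇p ∈ L
  have F1 : MF.imp (MF.dia () (MF.mand P' P')) (MF.dia () P') ∈ L := by
    have hd : Der ({x | ∃ A : SPF Unit V, x = (SPF.dia () A, A)} : Set (SPF Unit V × SPF Unit V)) (SPF.dia () (SPF.and (SPF.var p) (SPF.var p)))
        (SPF.dia () (SPF.var p)) := Der.mono () (Der.andE1 _ _)
    exact hP (SPF.dia () (SPF.and (SPF.var p) (SPF.var p)), SPF.dia () (SPF.var p)) hd
  -- box introduction inside PC
  have boxI : ∀ (Γ : Set (MF Unit V)) (X : MF Unit V), PC L Γ X →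
      PC L Γ (MF.neg (MF.dia () (MF.neg X))) := by
    intro Γ X hX
    have h1 : PC L Γ (MF.imp (MF.dia () (MF.neg X)) (MF.neg X)) := PC.ax (F2 _)
    have h2 := pc_contra hN h1
    exact PC.mp h2 (pc_dni hN hX)
  apply pc_toL hN
  show PC L ∅ (MF.imp (MF.mand P' (MF.dia () (MF.neg MF.bot))) (MF.dia () P'))
  apply pc_dt hN
  set Γ1 : Set (MF Unit V) := insert (MF.mand P' (MF.dia () (MF.neg MF.bot))) ∅ with hΓ1
  have hH : PC L Γ1 (MF.neg (MF.imp P' (MF.neg (MF.dia () (MF.neg MF.bot))))) :=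
    PC.hyp (Set.mem_insert _ _)
  -- extract p
  have hp : PC L Γ1 P' := by
    apply pc_byContra hN
    apply PC.mp (pc_mono hH (Set.subset_insert _ _))
    apply pc_dt hN
    exact pc_explosion hN (PC.mp
      (PC.hyp (Set.mem_insert_of_mem _ (Set.mem_insert _ _)))
      (PC.hyp (Set.mem_insert _ _)))
  -- extract ◇⊤
  have hdt : PC L Γ1 (MF.dia () (MF.neg MF.bot)) := by
    apply pc_byContra hN
    apply PC.mp (pc_mono hH (Set.subset_insert _ _))
    exact PC.mp (PC.ax (hN.k1 _ _)) (PC.hyp (Set.mem_insert _ _))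
  -- main argument by contradiction
  apply pc_byContra hN
  set Γ2 : Set (MF Unit V) := insert (MF.neg (MF.dia () P')) Γ1 with hΓ2
  have hp2 : PC L Γ2 P' := pc_mono hp (Set.subset_insert _ _)
  have hdt2 : PC L Γ2 (MF.dia () (MF.neg MF.bot)) := pc_mono hdt (Set.subset_insert _ _)
  have hndp : PC L Γ2 (MF.neg (MF.dia () P')) := PC.hyp (Set.mem_insert _ _)
  -- G1 : ¬◇¬(p → ¬p), i.e. □(p → ¬p)
  have hG1 : PC L Γ2 (MF.neg (MF.dia () (MF.neg (MF.imp P' (MF.neg P'))))) :=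
    PC.mp (pc_contra hN (PC.ax F1)) hndp
  -- □p
  have hbp : PC L Γ2 (MF.neg (MF.dia () (MF.neg P'))) := boxI _ _ hp2
  -- □¬¬p
  have hbnnp : PC L Γ2 (MF.neg (MF.dia () (MF.neg (MF.neg (MF.neg P'))))) :=
    boxI _ _ (pc_dni hN hp2)
  -- □¬p from kax
  have hkax1 : PC L Γ2 (MF.imp (MF.box () (MF.imp P' (MF.neg P')))
      (MF.imp (MF.box () P') (MF.box () (MF.neg P')))) := PC.ax (hN.kax () P' (MF.neg P'))
  have hbn : PC L Γ2 (MF.neg (MF.dia () (MF.neg (MF.neg P')))) :=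
    PC.mp (PC.mp hkax1 hG1) hbp
  -- □⊥ from kax
  have hkax2 : PC L Γ2 (MF.imp (MF.box () (MF.imp (MF.neg P') MF.bot))
      (MF.imp (MF.box () (MF.neg P')) (MF.box () MF.bot))) :=
    PC.ax (hN.kax () (MF.neg P') MF.bot)
  have hbbot : PC L Γ2 (MF.neg (MF.dia () (MF.neg MF.bot))) :=
    PC.mp (PC.mp hkax2 hbnnp) hbn
  exact PC.mp hbbot hdt2

end Main

/-- For `P = K⁺ + (◇A ⊢ A)`: the sequent `p ∧ ◇⊤ ⊢ ◇p` is not provable in `P`;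
hence `P ⊊ 𝒫(ℳ(P))` and `P` is not the strictly positive fragment of any
normal modal logic. -/
theorem diamond_elim_not_fragment {V : Type} (p : V) :
    ¬ Der ({x | ∃ A : SPF Unit V, x = (SPF.dia () A, A)} : Set (SPF Unit V × SPF Unit V)) (SPF.and (SPF.var p) (SPF.dia () SPF.top)) (SPF.dia () (SPF.var p))
    ∧ {x : SPF Unit V × SPF Unit V | Der ({x | ∃ A : SPF Unit V, x = (SPF.dia () A, A)} : Set (SPF Unit V × SPF Unit V)) x.1 x.2}
        ⊂ Pfrag (Mop {x : SPF Unit V × SPF Unit V | Der ({x | ∃ A : SPF Unit V, x = (SPF.dia () A, A)} : Set (SPF Unit V × SPF Unit V)) x.1 x.2})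
    ∧ ∀ L : Set (MF Unit V), MNormal L →
        Pfrag L ≠ {x : SPF Unit V × SPF Unit V | Der ({x | ∃ A : SPF Unit V, x = (SPF.dia () A, A)} : Set (SPF Unit V × SPF Unit V)) x.1 x.2} := by
  set P : Set (SPF Unit V × SPF Unit V) :=
    {x : SPF Unit V × SPF Unit V | Der ({x | ∃ A : SPF Unit V, x = (SPF.dia () A, A)} : Set (SPF Unit V × SPF Unit V)) x.1 x.2} with hPdef
  have h1 : ¬ Der ({x | ∃ A : SPF Unit V, x = (SPF.dia () A, A)} : Set (SPF Unit V × SPF Unit V)) (SPF.and (SPF.var p) (SPF.dia () SPF.top))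
      (SPF.dia () (SPF.var p)) := by
    intro h
    have h0 : evalSPF p (SPF.and (SPF.var p) (SPF.dia () SPF.top)) false :=
      ⟨⟨rfl, rfl⟩, ⟨rfl, trivial⟩⟩
    have := evalSPF_sound p h false h0
    exact absurd this.2.2 (by simp)
  have hwit : (SPF.and (SPF.var p) (SPF.dia () SPF.top), SPF.dia () (SPF.var p))
      ∈ Pfrag (Mop P) := by
    apply Set.mem_sInter.2
    rintro L ⟨hL1, hL2⟩
    exact key_hilbert p L hL1 hL2
  have hsub : P ⊆ Pfrag (Mop P) := by
    intro x hx
    exact Set.mem_sInter.2 fun L hL => hL.2 x hx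
  refine ⟨h1, ⟨hsub, fun hsup => h1 (hsup hwit)⟩, ?_⟩
  intro L hN heq
  have hmem : Mop P ⊆ L := by
    apply Set.sInter_subset_of_mem
    refine ⟨hN, fun x hx => ?_⟩
    rw [← heq] at hx
    exact hx
  have hfin : (SPF.and (SPF.var p) (SPF.dia () SPF.top), SPF.dia () (SPF.var p))
      ∈ Pfrag L := hmem hwit
  rw [heq] at hfin
  exact h1 hfin
end

section
/- Let L be a normal strictly positive logic axiomatized over K⁺ by a set S of sequent schemata, and let L_D be its deep inference version. Then A ⊢ B is provable in the sequent calculus L if and only if B is derivable from A in L_D. -/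
def Ctx.comp {α V : Type} : Ctx α V → Ctx α V → Ctx α V
  | Ctx.hole, D => D
  | Ctx.andL C B, D => Ctx.andL (C.comp D) B
  | Ctx.andR A C, D => Ctx.andR A (C.comp D)
  | Ctx.dia a C, D => Ctx.dia a (C.comp D)

lemma Ctx.fill_comp {α V : Type} (C D : Ctx α V) (F : SPF α V) :
    (C.comp D).fill F = C.fill (D.fill F) := by
  induction C <;> simp [Ctx.comp, Ctx.fill, *]

lemma DStep.ctx {α V : Type} {Ax : Set (SPF α V × SPF α V)} {b : Bool}
    (C : Ctx α V) {F G : SPF α V} (h : DStep Ax b F G) :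
    DStep Ax b (C.fill F) (C.fill G) := by
  obtain ⟨D, F', G', hr, rfl, rfl⟩ := h
  exact ⟨C.comp D, F', G', hr, (Ctx.fill_comp ..).symm, (Ctx.fill_comp ..).symm⟩

lemma Deriv.ctx {α V : Type} {Ax : Set (SPF α V × SPF α V)} {b : Bool}
    (C : Ctx α V) {F G : SPF α V} (h : Deriv Ax b F G) :
    Deriv Ax b (C.fill F) (C.fill G) := by
  induction h with
  | refl => exact Relation.ReflTransGen.refl
  | tail _ hs ih => exact ih.tail (hs.ctx C)

lemma Deriv.single' {α V : Type} {Ax : Set (SPF α V × SPF α V)} {b : Bool}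
    {F G : SPF α V} (h : DIRule Ax b F G) : Deriv Ax b F G :=
  Relation.ReflTransGen.single ⟨Ctx.hole, F, G, h, rfl, rfl⟩

lemma Der.ctx {α V : Type} {Ax : Set (SPF α V × SPF α V)}
    (C : Ctx α V) {F G : SPF α V} (h : Der Ax F G) :
    Der Ax (C.fill F) (C.fill G) := by
  induction C with
  | hole => exact h
  | andL C B ih => exact Der.andI (Der.cut (Der.andE1 ..) ih) (Der.andE2 ..)
  | andR A C ih => exact Der.andI (Der.andE1 ..) (Der.cut (Der.andE2 ..) ih)
  | dia a C ih => exact Der.mono a ih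

theorem sequent_iff_deep' {α V : Type} (S : Set (SPF α V × SPF α V))
    (A B : SPF α V) :
    Der S A B ↔ Deriv S true A B := by
  constructor
  · intro h
    induction h with
    | id A => exact Relation.ReflTransGen.refl
    | top A => exact Deriv.single' (DIRule.top A rfl)
    | cut h1 h2 ih1 ih2 => exact ih1.trans ih2
    | andE1 A B => exact Deriv.single' (DIRule.andE1 A B)
    | andE2 A B => exact Deriv.single' (DIRule.andE2 A B)
    | @andI A B C h1 h2 ih1 ih2 =>
        exact (Deriv.single' (DIRule.dup A)).trans
          ((ih1.ctx (Ctx.andL Ctx.hole A)).trans (ih2.ctx (Ctx.andR B Ctx.hole)))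
    | mono a h ih => exact ih.ctx (Ctx.dia a Ctx.hole)
    | ax h => exact Deriv.single' (DIRule.ax h)
  · intro h
    induction h with
    | refl => exact Der.id A
    | tail _ hs ih =>
        obtain ⟨C, F, G, hr, rfl, rfl⟩ := hs
        refine ih.cut (Der.ctx C ?_)
        cases hr with
        | dup _ => exact Der.andI (Der.id _) (Der.id _)
        | andE1 _ _ => exact Der.andE1 _ _
        | andE2 _ _ => exact Der.andE2 _ _
        | top _ _ => exact Der.top _
        | ax h => exact Der.ax h

/-- The sequent calculus `L` (over `K⁺` with axioms `S`) and its deep inference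
version `L_D` prove the same sequents. -/
theorem sequent_iff_deep {α V : Type} (S : Set (SPF α V × SPF α V))
    (A B : SPF α V) :
    Der S A B ↔ Deriv S true A B :=
  sequent_iff_deep' S A B
end

section
/- Let R be a word rewriting system over Σ and L_R the associated strictly positive logic. Then for all words A, B ∈ Σ*, the sequent Ap ⊢ Bp is provable in L_R if and only if A ↠_R B. In particular the translation from semi-Thue systems to strictly positive logics is faithful. -/
/-!
Soundness is checked in the canonical word frame of `R`: worlds are words, `w` sees `v` through
`⟨a⟩` iff `w ↠_R a v`, and every variable holds at the words that rewrite to the empty word.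
There `Cp` holds at `w` iff `w ↠_R C u` for some `u ↠_R ε`; since `Ap` holds at `A`, a proof of
`Ap ⊢ Bp` yields `A ↠_R B u ↠_R B`. Conversely a step `XUY → XVY` is the axiom instance
`U(Yp) ⊢ V(Yp)` placed under the diamonds of `X`.
-/

variable {α V : Type} {R : Set (List α × List α)}

theorem wApp_append (X Y : List α) (F : SPF α V) : wApp (X ++ Y) F = wApp X (wApp Y F) :=
  List.foldr_append ..

theorem Der.wApp_mono {Ax : Set (SPF α V × SPF α V)} (X : List α) {F G : SPF α V}
    (h : Der Ax F G) : Der Ax (wApp X F) (wApp X G) := by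
  induction X with
  | nil => exact h
  | cons a X ih => exact Der.mono a ih

theorem RStep.der_wApp (F : SPF α V) {w v : List α} (h : RStep R w v) :
    Der (DAx R) (wApp w F) (wApp v F) := by
  obtain ⟨X, U, W, Y, hUW, rfl, rfl⟩ := h
  simp only [wApp_append]
  exact Der.wApp_mono X (Der.ax ⟨U, W, wApp Y F, hUW, rfl⟩)

theorem Rewrites.der_wApp (F : SPF α V) {w v : List α} (h : Rewrites R w v) :
    Der (DAx R) (wApp w F) (wApp v F) := by
  induction h with
  | refl => exact Der.id _
  | tail _ hstep ih => exact ih.cut (hstep.der_wApp F)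

theorem Rewrites.append_left (X : List α) {w v : List α} (h : Rewrites R w v) :
    Rewrites R (X ++ w) (X ++ v) := by
  induction h with
  | refl => exact Relation.ReflTransGen.refl
  | tail _ hstep ih =>
    obtain ⟨X', U, W, Y, hUW, rfl, rfl⟩ := hstep
    exact ih.tail ⟨X ++ X', U, W, Y, hUW, by simp, by simp⟩

def WordSat (R : Set (List α × List α)) (val : V → List α → Prop) :
    SPF α V → List α → Prop
  | .var q, w => val q w
  | .top, _ => True
  | .and F G, w => WordSat R val F w ∧ WordSat R val G w
  | .dia a F, w => ∃ v, Rewrites R w (a :: v) ∧ WordSat R val F v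

namespace WordSat

variable {val : V → List α → Prop}

theorem of_rewrites (hval : ∀ q w v, Rewrites R w v → val q v → val q w)
    (F : SPF α V) {w v : List α} (h : Rewrites R w v)
    (hv : WordSat R val F v) : WordSat R val F w := by
  induction F generalizing w v with
  | var q => exact hval q w v h hv
  | top => trivial
  | and F G ihF ihG => exact ⟨ihF h hv.1, ihG h hv.2⟩
  | dia a F _ =>
    obtain ⟨u, hu, hsu⟩ := hv
    exact ⟨u, h.trans hu, hsu⟩

theorem wApp_iff (hval : ∀ q w v, Rewrites R w v → val q v → val q w)
    (U : List α) (C : SPF α V) (w : List α) :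
    WordSat R val (wApp U C) w ↔ ∃ v, Rewrites R w (U ++ v) ∧ WordSat R val C v := by
  induction U generalizing w with
  | nil =>
    exact ⟨fun h => ⟨w, .refl, h⟩, fun ⟨v, hv, hs⟩ => of_rewrites hval C hv hs⟩
  | cons a U ih =>
    constructor
    · rintro ⟨v, hv, hs⟩
      obtain ⟨u, hu, hsu⟩ := (ih v).mp hs
      exact ⟨u, hv.trans (hu.append_left [a]), hsu⟩
    · rintro ⟨v, hv, hs⟩
      exact ⟨U ++ v, hv, (ih _).mpr ⟨v, .refl, hs⟩⟩

theorem of_der (hval : ∀ q w v, Rewrites R w v → val q v → val q w)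
    {F G : SPF α V} (h : Der (DAx R) F G) (w : List α)
    (hF : WordSat R val F w) : WordSat R val G w := by
  induction h generalizing w with
  | id => exact hF
  | top => trivial
  | cut _ _ ih₁ ih₂ => exact ih₂ w (ih₁ w hF)
  | andE1 => exact hF.1
  | andE2 => exact hF.2
  | andI _ _ ih₁ ih₂ => exact ⟨ih₁ w hF, ih₂ w hF⟩
  | mono a _ ih =>
    obtain ⟨v, hv, hs⟩ := hF
    exact ⟨v, hv, ih v hs⟩
  | ax hUW =>
    obtain ⟨U, W, C, hUW, ⟨⟩⟩ := hUW
    obtain ⟨v, hv, hsv⟩ := (wApp_iff hval U C w).mp hF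
    exact (wApp_iff hval W C w).mpr ⟨v, hv.tail ⟨[], U, W, v, hUW, by simp, by simp⟩, hsv⟩

end WordSat

theorem Rewrites.of_der_wApp (p : V) {A B : List α}
    (h : Der (DAx R) (wApp A (SPF.var p)) (wApp B (SPF.var p))) : Rewrites R A B := by
  let val : V → List α → Prop := fun _ w => Rewrites R w []
  have hval : ∀ q w v, Rewrites R w v → val q v → val q w := fun _ _ _ => .trans
  have hA : WordSat R val (wApp A (SPF.var p)) A :=
    (WordSat.wApp_iff hval A _ A).mpr ⟨[], by rw [List.append_nil]; exact .refl, .refl⟩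
  obtain ⟨v, hBv, hv⟩ := (WordSat.wApp_iff hval B _ A).mp (WordSat.of_der hval h A hA)
  simpa [Rewrites] using hBv.trans (hv.append_left B)

/-- Faithfulness: `Ap ⊢ Bp` is provable in `L_R` iff `A ↠_R B`. -/
theorem rewrites_iff_logic {α V : Type} (R : Set (List α × List α)) (p : V)
    (A B : List α) :
    Der (DAx R) (wApp A (SPF.var p)) (wApp B (SPF.var p)) ↔ Rewrites R A B :=
  ⟨Rewrites.of_der_wApp p, Rewrites.der_wApp _⟩
end

section
/- Let L_R be the logic of a word rewriting system R, and suppose ⊤ does not occur in strictly positive formulas A and B. If B is derivable from A in the deep inference system (L_R)_D, then there is a derivation of B from A in (L_R)_D in which the ⊤-rule is never applied. -/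
/-- `A'` is obtained from `A` by replacing some occurrences of `⊤` by arbitrary formulas. -/
inductive Refines {α V : Type} : SPF α V → SPF α V → Prop
  | var (v) : Refines (SPF.var v) (SPF.var v)
  | top (A) : Refines A SPF.top
  | and {A A' B B'} : Refines A' A → Refines B' B →
      Refines (SPF.and A' B') (SPF.and A B)
  | dia (a) {A A'} : Refines A' A → Refines (SPF.dia a A') (SPF.dia a A)

theorem Refines.refl {α V : Type} : ∀ A : SPF α V, Refines A A
  | SPF.var v => Refines.var v
  | SPF.top => Refines.top _
  | SPF.and A B => Refines.and (Refines.refl A) (Refines.refl B)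
  | SPF.dia a A => Refines.dia a (Refines.refl A)

theorem Refines.eq_of_noTop {α V : Type} {A' A : SPF α V}
    (h : Refines A' A) (hA : A.noTop) : A' = A := by
  induction h with
  | var v => rfl
  | top A => exact absurd hA id
  | and h1 h2 ih1 ih2 => rw [ih1 hA.1, ih2 hA.2]
  | dia a h ih => rw [ih hA]

theorem refines_fill {α V : Type} (C : Ctx α V) (F A' : SPF α V)
    (h : Refines A' (C.fill F)) :
    ∃ (C' : Ctx α V) (F' : SPF α V), A' = C'.fill F' ∧ Refines F' F ∧
      ∀ G G' : SPF α V, Refines G' G → Refines (C'.fill G') (C.fill G) := by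
  induction C generalizing A' with
  | hole => exact ⟨Ctx.hole, A', rfl, h, fun G G' hg => hg⟩
  | andL C B ih =>
    cases h with
    | and h1 h2 =>
      obtain ⟨C', F', rfl, hF, hlift⟩ := ih _ h1
      exact ⟨Ctx.andL C' _, F', rfl, hF,
        fun G G' hg => Refines.and (hlift G G' hg) h2⟩
  | andR A C ih =>
    cases h with
    | and h1 h2 =>
      obtain ⟨C', F', rfl, hF, hlift⟩ := ih _ h2
      exact ⟨Ctx.andR _ C', F', rfl, hF,
        fun G G' hg => Refines.and h1 (hlift G G' hg)⟩
  | dia a C ih =>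
    cases h with
    | dia a h1 =>
      obtain ⟨C', F', rfl, hF, hlift⟩ := ih _ h1
      exact ⟨Ctx.dia a C', F', rfl, hF,
        fun G G' hg => Refines.dia a (hlift G G' hg)⟩

theorem refines_wApp {α V : Type} (U : List α) (C : SPF α V) (F' : SPF α V)
    (h : Refines F' (wApp U C)) : ∃ C', F' = wApp U C' ∧ Refines C' C := by
  induction U generalizing F' with
  | nil => exact ⟨F', rfl, h⟩
  | cons a U ih =>
    cases h with
    | dia a h1 =>
      obtain ⟨C', rfl, hC⟩ := ih _ h1
      exact ⟨C', rfl, hC⟩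

theorem wApp_refines {α V : Type} (W : List α) {C' C : SPF α V}
    (h : Refines C' C) : Refines (wApp W C') (wApp W C) := by
  induction W with
  | nil => exact h
  | cons a W ih => exact Refines.dia a ih

theorem step_sim {α V : Type} (R : Set (List α × List α)) {A B A' : SPF α V}
    (h : DStep (DAx R) true A B) (hA : Refines A' A) :
    ∃ B', Deriv (DAx R) false A' B' ∧ Refines B' B := by
  obtain ⟨C, F, G, hr, rfl, rfl⟩ := h
  obtain ⟨C', F', rfl, hF, hlift⟩ := refines_fill C F A' hA
  cases hr with
  | dup A =>
    exact ⟨C'.fill (SPF.and F' F'),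
      Relation.ReflTransGen.single ⟨C', F', _, DIRule.dup F', rfl, rfl⟩,
      hlift _ _ (Refines.and hF hF)⟩
  | andE1 A B =>
    cases hF with
    | and h1 h2 =>
      exact ⟨C'.fill _,
        Relation.ReflTransGen.single ⟨C', _, _, DIRule.andE1 _ _, rfl, rfl⟩,
        hlift _ _ h1⟩
  | andE2 A B =>
    cases hF with
    | and h1 h2 =>
      exact ⟨C'.fill _,
        Relation.ReflTransGen.single ⟨C', _, _, DIRule.andE2 _ _, rfl, rfl⟩,
        hlift _ _ h2⟩
  | top A _ =>
    exact ⟨C'.fill F', Relation.ReflTransGen.refl, hlift _ _ (Refines.top F')⟩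
  | ax hax =>
    obtain ⟨U, W, C₀, hUW, heq⟩ := hax
    obtain ⟨h1, h2⟩ := Prod.mk.injEq .. ▸ heq
    subst h1; subst h2
    obtain ⟨C₀', rfl, hC₀⟩ := refines_wApp U C₀ F' hF
    exact ⟨C'.fill (wApp W C₀'),
      Relation.ReflTransGen.single
        ⟨C', _, _, DIRule.ax ⟨U, W, C₀', hUW, rfl⟩, rfl, rfl⟩,
      hlift _ _ (wApp_refines W hC₀)⟩

/-- `⊤`-elimination: if `⊤` occurs in neither `A` nor `B` and `B` is derivable
from `A` in `(L_R)_D`, then there is a derivation not using the `⊤`-rule. -/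
theorem top_elimination {α V : Type} (R : Set (List α × List α))
    (A B : SPF α V) (hA : A.noTop) (hB : B.noTop)
    (h : Deriv (DAx R) true A B) :
    Deriv (DAx R) false A B := by
  suffices H : ∀ A' : SPF α V, Refines A' A →
      ∃ B', Deriv (DAx R) false A' B' ∧ Refines B' B by
    obtain ⟨B', hd, href⟩ := H A (Refines.refl A)
    rwa [href.eq_of_noTop hB] at hd
  clear hA hB
  induction h with
  | refl => exact fun A' hA' => ⟨A', Relation.ReflTransGen.refl, hA'⟩
  | tail _ hstep ih =>
    intro A' hA'
    obtain ⟨B', hd, href⟩ := ih A' hA'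
    obtain ⟨C', hd', href'⟩ := step_sim R hstep href
    exact ⟨C', hd.trans hd', href'⟩
end

section
/- Let L_R be the logic of a word rewriting system R and A, B ∈ Σ* be words. If Bp is derivable from Ap in the deep inference system (L_R)_D, then there is such a derivation in which no conjunction rule (introduction or elimination) and no ⊤-rule is applied; equivalently, the derivation consists solely of applications of the rewriting rules of R within contexts of the form Xq with X ∈ Σ*. -/
section ConjElim

variable {α V : Type}

/-- Traces: words along diamond-paths from the root to an occurrence of `p`. -/
def tr (p : V) : SPF α V → List α → Prop
  | SPF.var v => fun w => v = p ∧ w = []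
  | SPF.top => fun _ => False
  | SPF.and A B => fun w => tr p A w ∨ tr p B w
  | SPF.dia a A => fun w => ∃ t, tr p A t ∧ w = a :: t

lemma tr_wApp (p : V) (W : List α) (F : SPF α V) (w : List α) :
    tr p (wApp W F) w ↔ ∃ t, tr p F t ∧ w = W ++ t := by
  induction W generalizing w with
  | nil => simp [wApp]
  | cons a W ih =>
    simp only [wApp, List.foldr] at *
    constructor
    · rintro ⟨t, ht, rfl⟩
      rcases (ih t).1 ht with ⟨u, hu, rfl⟩
      exact ⟨u, hu, rfl⟩
    · rintro ⟨t, ht, rfl⟩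
      exact ⟨W ++ t, (ih _).2 ⟨t, ht, rfl⟩, rfl⟩

/-- The word of diamonds along a context's path to the hole. -/
def cpre : Ctx α V → List α
  | Ctx.hole => []
  | Ctx.andL C _ => cpre C
  | Ctx.andR _ C => cpre C
  | Ctx.dia a C => a :: cpre C

/-- Traces of a context not passing through the hole. -/
def crest (p : V) : Ctx α V → List α → Prop
  | Ctx.hole => fun _ => False
  | Ctx.andL C B => fun w => crest p C w ∨ tr p B w
  | Ctx.andR A C => fun w => tr p A w ∨ crest p C w
  | Ctx.dia a C => fun w => ∃ t, crest p C t ∧ w = a :: t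

lemma tr_fill (p : V) (C : Ctx α V) (F : SPF α V) (w : List α) :
    tr p (C.fill F) w ↔ (∃ t, tr p F t ∧ w = cpre C ++ t) ∨ crest p C w := by
  induction C generalizing w with
  | hole => simp [Ctx.fill, cpre, crest]
  | andL C B ih =>
    simp only [Ctx.fill, tr, cpre, crest, ih]
    exact or_assoc
  | andR A C ih =>
    simp only [Ctx.fill, tr, cpre, crest, ih]
    exact or_left_comm

  | dia a C ih =>
    simp only [Ctx.fill, tr, cpre, crest, ih]
    constructor
    · rintro ⟨t, (⟨u, hu, rfl⟩ | hc), rfl⟩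
      · exact Or.inl ⟨u, hu, rfl⟩
      · exact Or.inr ⟨t, hc, rfl⟩
    · rintro (⟨u, hu, rfl⟩ | ⟨t, hc, rfl⟩)
      · exact ⟨cpre C ++ u, Or.inl ⟨u, hu, rfl⟩, rfl⟩
      · exact ⟨t, Or.inr hc, rfl⟩

lemma dstep_trace {R : Set (List α × List α)} {p : V} {F G : SPF α V}
    (h : DStep (DAx R) true F G) :
    ∀ w, tr p G w → ∃ v, tr p F v ∧ (v = w ∨ RStep R v w) := by
  rcases h with ⟨C, F0, G0, hr, rfl, rfl⟩
  intro w hw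
  rcases (tr_fill p C G0 w).1 hw with ⟨t, ht, rfl⟩ | hc
  · -- trace through the hole
    have key : ∃ s, tr p F0 s ∧ (s = t ∨ RStep R s t) := by
      cases hr with
      | dup A => exact ⟨t, ht.elim id id, Or.inl rfl⟩
      | andE1 A B => exact ⟨t, Or.inl ht, Or.inl rfl⟩
      | andE2 A B => exact ⟨t, Or.inr ht, Or.inl rfl⟩
      | top A h => exact absurd ht id
      | ax hab =>
        rcases hab with ⟨U, W, C0, hUW, hx⟩
        have h1 : F0 = wApp U C0 := congrArg Prod.fst hx
        have h2 : G0 = wApp W C0 := congrArg Prod.snd hx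
        subst h1; subst h2
        rcases (tr_wApp p W C0 t).1 ht with ⟨u, hu, rfl⟩
        exact ⟨U ++ u, (tr_wApp p U C0 _).2 ⟨u, hu, rfl⟩,
          Or.inr ⟨[], U, W, u, hUW, by simp⟩⟩
    rcases key with ⟨s, hs, hst⟩
    refine ⟨cpre C ++ s, (tr_fill p C F0 _).2 (Or.inl ⟨s, hs, rfl⟩), ?_⟩
    rcases hst with rfl | ⟨X, U, W, Y, hUW, rfl, rfl⟩
    · exact Or.inl rfl
    · exact Or.inr ⟨cpre C ++ X, U, W, Y, hUW, by simp, by simp⟩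
  · exact ⟨w, (tr_fill p C F0 w).2 (Or.inr hc), Or.inl rfl⟩

lemma deriv_trace {R : Set (List α × List α)} {p : V} {F G : SPF α V}
    (h : Deriv (DAx R) true F G) :
    ∀ w, tr p G w → ∃ v, tr p F v ∧ Rewrites R v w := by
  induction h with
  | refl => exact fun w hw => ⟨w, hw, Relation.ReflTransGen.refl⟩
  | tail _ hstep ih =>
    intro w hw
    rcases dstep_trace hstep w hw with ⟨v, hv, hvw⟩
    rcases ih v hv with ⟨u, hu, huv⟩
    refine ⟨u, hu, ?_⟩
    rcases hvw with rfl | hvw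
    · exact huv
    · exact huv.tail hvw

lemma rewrites_lift {R : Set (List α × List α)} (p : V) {A B : List α}
    (h : Rewrites R A B) :
    Relation.ReflTransGen
      (fun F G => ∃ (X U W Y : List α), (U, W) ∈ R ∧
        F = wApp (X ++ U ++ Y) (SPF.var p) ∧ G = wApp (X ++ W ++ Y) (SPF.var p))
      (wApp A (SPF.var p)) (wApp B (SPF.var p)) := by
  induction h with
  | refl => exact Relation.ReflTransGen.refl
  | tail _ hstep ih =>
    rcases hstep with ⟨X, U, W, Y, hUW, rfl, rfl⟩
    exact ih.tail ⟨X, U, W, Y, hUW, rfl, rfl⟩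

end ConjElim

/-- Conjunction elimination: a deep inference derivation of `Bp` from `Ap`
(`A, B ∈ Σ*`) can be replaced by one using only rewriting rules of `R`
within word contexts. -/
theorem conjunction_elimination {α V : Type} (R : Set (List α × List α))
    (p : V) (A B : List α)
    (h : Deriv (DAx R) true (wApp A (SPF.var p)) (wApp B (SPF.var p))) :
    Relation.ReflTransGen
      (fun F G => ∃ (X U W Y : List α), (U, W) ∈ R ∧
        F = wApp (X ++ U ++ Y) (SPF.var p) ∧ G = wApp (X ++ W ++ Y) (SPF.var p))
      (wApp A (SPF.var p)) (wApp B (SPF.var p)) := by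
  have hB : tr p (wApp B (SPF.var p)) B :=
    (tr_wApp p B (SPF.var p) B).2 ⟨[], ⟨rfl, rfl⟩, by simp⟩
  rcases deriv_trace h B hB with ⟨v, hv, hrw⟩
  have hvA : v = A := by
    rcases (tr_wApp p A (SPF.var p) v).1 hv with ⟨t, ⟨_, rfl⟩, rfl⟩
    simp
  subst hvA
  exact rewrites_lift p hrw
end
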